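/- Let n ≥ 3 be an integer and let ŷ ∈ ℝⁿ satisfy ŷ(1) = 0 and ŷ(n) = 0. Suppose z̄ ∈ ℝ is such that s := ∑_{i=2}^{n−1} ŷ(i) z̄^{i−1} ≠ 0. Define c̄ := s / (∑_{i=0}^{n−1} z̄^{2i}) and ȳ ∈ ℝⁿ by ȳ(k) = c̄ z̄^{k−1} for k = 1,…,n. Then rank(H₂(ȳ)) = 1 and ‖ȳ − ŷ‖² = ‖ŷ‖² − c̄² ∑_{i=0}^{n−1} z̄^{2i} < ‖ŷ‖². -/

import Mathlib

/-- The 2-row Hankel operator `H₂ : ℝⁿ → ℝ^{2×(n-1)}` (0-based indices):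
`(H₂ y)(i,j) = y (i + j)`. -/
def hankel2 (n : ℕ) (hn : 1 < n) (y : EuclideanSpace ℝ (Fin n)) :
    Matrix (Fin 2) (Fin (n - 1)) ℝ :=
  fun i j => y ⟨i.val + j.val, by omega⟩

open Finset RealInnerProductSpace

/-!
The vector `ȳ` is `c̄ • v` for the geometric vector `v = (1, z̄, …, z̄ⁿ⁻¹)`, so `H₂(ȳ)` is the
nonzero outer product of `(1, z̄)` and `c̄ (1, z̄, …, z̄ⁿ⁻²)` and has rank one. Since `ŷ` vanishes at
both ends, `s = ⟪v, ŷ⟫` and `c̄ = ⟪v, ŷ⟫ / ‖v‖²`: `ȳ` is the orthogonal projection of `ŷ` onto the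
line through `v`, and Pythagoras gives `‖ȳ − ŷ‖² = ‖ŷ‖² − c̄²‖v‖²`, which is `< ‖ŷ‖²` as `c̄ ≠ 0`.
-/

theorem norm_smul_sub_sq_of_inner_eq {E : Type*} [NormedAddCommGroup E] [InnerProductSpace ℝ E]
    {v w : E} {c : ℝ} (h : ⟪v, w⟫ = c * ‖v‖ ^ 2) :
    ‖c • v - w‖ ^ 2 = ‖w‖ ^ 2 - c ^ 2 * ‖v‖ ^ 2 := by
  rw [norm_sub_sq_real, norm_smul, real_inner_smul_left, h, Real.norm_eq_abs, mul_pow, sq_abs]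
  ring

theorem Matrix.one_le_rank_of_ne_zero {K m n : Type*} [Field K] [Fintype n] [DecidableEq n]
    {A : Matrix m n K} (hA : A ≠ 0) : 1 ≤ A.rank := by
  rw [Nat.one_le_iff_ne_zero, Matrix.rank, Ne, Submodule.finrank_eq_zero,
    LinearMap.range_eq_bot, ← Matrix.toLin'_apply']
  exact fun h => hA (Matrix.toLin'.injective (h.trans (map_zero _).symm))

theorem Fin.sum_ite_interior_eq_sum {M : Type*} [AddCommMonoid M] {n : ℕ} (f : Fin n → M)
    (hf : ∀ i : Fin n, (i : ℕ) = 0 ∨ (i : ℕ) = n - 1 → f i = 0) :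
    ∑ i : Fin n, (if 1 ≤ (i : ℕ) ∧ (i : ℕ) ≤ n - 2 then f i else 0) = ∑ i, f i := by
  refine sum_congr rfl fun i _ => ?_
  split_ifs with hi
  · rfl
  · exact (hf i (by omega)).symm

noncomputable def geomVec (n : ℕ) (z : ℝ) : EuclideanSpace ℝ (Fin n) :=
  WithLp.toLp 2 fun k => z ^ (k : ℕ)

section geomVec

variable {n : ℕ} {z : ℝ}

@[simp]
theorem geomVec_apply (k : Fin n) : geomVec n z k = z ^ (k : ℕ) := rfl

theorem norm_geomVec_sq : ‖geomVec n z‖ ^ 2 = ∑ i ∈ range n, z ^ (2 * i) := by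
  rw [EuclideanSpace.real_norm_sq_eq, ← Fin.sum_univ_eq_sum_range]
  simp only [geomVec_apply, ← pow_mul, mul_comm]

theorem geomVec_ne_zero (hn : 0 < n) : geomVec n z ≠ 0 := fun h => by
  simpa using congrArg (· ⟨0, hn⟩) h

theorem inner_geomVec (y : EuclideanSpace ℝ (Fin n)) :
    ⟪geomVec n z, y⟫ = ∑ i, y i * z ^ (i : ℕ) := by
  simp [PiLp.inner_apply]

theorem hankel2_smul_geomVec (hn : 1 < n) (c : ℝ) :
    hankel2 n hn (c • geomVec n z) =
      Matrix.vecMulVec (fun i : Fin 2 => z ^ (i : ℕ)) (fun j : Fin (n - 1) => c * z ^ (j : ℕ)) := by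
  ext i j
  simp only [hankel2, PiLp.smul_apply, geomVec_apply, smul_eq_mul, Matrix.vecMulVec_apply]
  ring

theorem rank_hankel2_smul_geomVec (hn : 1 < n) {c : ℝ} (hc : c ≠ 0) :
    (hankel2 n hn (c • geomVec n z)).rank = 1 := by
  refine le_antisymm ?_ (Matrix.one_le_rank_of_ne_zero fun h => hc ?_)
  · rw [hankel2_smul_geomVec]
    exact Matrix.rank_vecMulVec_le _ _
  · simpa [hankel2] using congrFun (congrFun h 0) ⟨0, by omega⟩

end geomVec

/-- let `ŷ(1) = 0` and `ŷ(n) = 0` (0-based: entries `0` and `n-1` vanish), and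
suppose `s := ∑_{i=2}^{n-1} ŷ(i) z̄^{i-1}` (0-based: `∑_{1 ≤ i ≤ n-2} ŷ(i) z̄^{i}`) is nonzero.
With `c̄ := s / ∑_{i=0}^{n-1} z̄^{2i}` and `ȳ(k) = c̄ z̄^{k-1}` (0-based: `ȳ(k) = c̄ z̄^{k}`),
one has `rank(H₂(ȳ)) = 1` and `‖ȳ − ŷ‖² = ‖ŷ‖² − c̄² ∑_{i=0}^{n-1} z̄^{2i} < ‖ŷ‖²`. -/
theorem stmt12 (n : ℕ) (hn : 3 ≤ n)
    (yhat : EuclideanSpace ℝ (Fin n))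
    (h1 : yhat ⟨0, by omega⟩ = 0) (h2 : yhat ⟨n - 1, by omega⟩ = 0)
    (zbar : ℝ) (s : ℝ)
    (hs_def : s = ∑ i : Fin n,
        if 1 ≤ (i : ℕ) ∧ (i : ℕ) ≤ n - 2 then yhat i * zbar ^ (i : ℕ) else 0)
    (hs : s ≠ 0)
    (cbar : ℝ) (hc_def : cbar = s / (∑ i ∈ Finset.range n, zbar ^ (2 * i)))
    (ybar : EuclideanSpace ℝ (Fin n))
    (hy_def : ∀ k : Fin n, ybar k = cbar * zbar ^ (k : ℕ)) :
    Matrix.rank (hankel2 n (by omega) ybar) = 1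
      ∧ ‖ybar - yhat‖ ^ 2 = ‖yhat‖ ^ 2 - cbar ^ 2 * (∑ i ∈ Finset.range n, zbar ^ (2 * i))
      ∧ ‖ybar - yhat‖ ^ 2 < ‖yhat‖ ^ 2 := by
  set v := geomVec n zbar
  rw [← norm_geomVec_sq] at hc_def ⊢
  have hv : 0 < ‖v‖ ^ 2 := by have := geomVec_ne_zero (z := zbar) (by omega : 0 < n); positivity
  have hc : cbar ≠ 0 := hc_def ▸ div_ne_zero hs hv.ne'
  have hybar : ybar = cbar • v := by ext k; simp [v, hy_def]
  have hinner : ⟪v, yhat⟫ = cbar * ‖v‖ ^ 2 := by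
    have hends (i : Fin n) (hi : (i : ℕ) = 0 ∨ (i : ℕ) = n - 1) : yhat i * zbar ^ (i : ℕ) = 0 := by
      obtain hi | hi := hi
      · simp [show i = ⟨0, by omega⟩ from Fin.ext hi, h1]
      · simp [show i = ⟨n - 1, by omega⟩ from Fin.ext hi, h2]
    rw [inner_geomVec, ← Fin.sum_ite_interior_eq_sum _ hends, ← hs_def, hc_def,
      div_mul_cancel₀ _ hv.ne']
  have hnorm := norm_smul_sub_sq_of_inner_eq hinner
  subst hybar
  refine ⟨rank_hankel2_smul_geomVec _ hc, hnorm, ?_⟩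
  rw [hnorm]
  have : 0 < cbar ^ 2 * ‖v‖ ^ 2 := by positivity
  linarith
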